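/- Let z_{l+1} = σ_l(W_l z_l + A_l x + b_l) for l = 0,…,L−1 with z₀ = 0 and W₀ = 0, and set f(x) = z_L. If all entries of W_l are non-negative for l ≥ 1, σ₀ is convex, and σ_l is convex and non-decreasing (applied entry-wise) for l = 1,…,L−1, then x ↦ f(x) is a convex function of x. -/
import Mathlib


open MeasureTheory

/-- The layers of an input convex neural network:
`z₀ = 0`, `z_{l+1} = σ_l (W_l z_l + A_l x + b_l)` with `σ_l` applied entry-wise. -/
def icnnLayer (d : ℕ) (n : ℕ → ℕ)
    (W : ∀ l : ℕ, Matrix (Fin (n (l + 1))) (Fin (n l)) ℝ)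
    (A : ∀ l : ℕ, Matrix (Fin (n (l + 1))) (Fin d) ℝ)
    (b : ∀ l : ℕ, Fin (n (l + 1)) → ℝ)
    (σ : ℕ → ℝ → ℝ) (x : Fin d → ℝ) : ∀ l : ℕ, Fin (n l) → ℝ
  | 0 => 0
  | l + 1 => fun i =>
      σ l ((W l).mulVec (icnnLayer d n W A b σ x l) i + (A l).mulVec x i + b l i)

/-- Composition of a monotone convex function with a convex function is convex. -/
lemma icnn_comp_aux {E : Type*} [AddCommMonoid E] [Module ℝ E]
    {g : E → ℝ} {s : ℝ → ℝ} (hs : ConvexOn ℝ Set.univ s) (hm : Monotone s)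
    (hg : ConvexOn ℝ Set.univ g) : ConvexOn ℝ Set.univ fun x => s (g x) := by
  refine ⟨convex_univ, fun x _ y _ a c ha hc hac => ?_⟩
  calc s (g (a • x + c • y)) ≤ s (a * g x + c * g y) :=
        hm (hg.2 (Set.mem_univ x) (Set.mem_univ y) ha hc hac)
    _ ≤ a • s (g x) + c • s (g y) :=
        hs.2 (Set.mem_univ _) (Set.mem_univ _) ha hc hac

/-- ICNN convexity (Amos et al., Proposition 1): if the weights `W_l` (`l ≥ 1`) are
entry-wise non-negative, `σ₀` is convex, and `σ_l` is convex and non-decreasing for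
`1 ≤ l ≤ L - 1`, then every coordinate of `x ↦ z_L(x)` (in particular the scalar
output `f(x) = z_L`) is a convex function of the input `x`. -/
theorem icnn_is_convex (d L : ℕ) (n : ℕ → ℕ)
    (W : ∀ l : ℕ, Matrix (Fin (n (l + 1))) (Fin (n l)) ℝ)
    (A : ∀ l : ℕ, Matrix (Fin (n (l + 1))) (Fin d) ℝ)
    (b : ∀ l : ℕ, Fin (n (l + 1)) → ℝ)
    (σ : ℕ → ℝ → ℝ)
    (hW0 : W 0 = 0)
    (hW : ∀ l : ℕ, 1 ≤ l → ∀ i j, 0 ≤ W l i j)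
    (hσ0 : ConvexOn ℝ Set.univ (σ 0))
    (hσ : ∀ l : ℕ, 1 ≤ l → l ≤ L - 1 → ConvexOn ℝ Set.univ (σ l) ∧ Monotone (σ l)) :
    ∀ i : Fin (n L), ConvexOn ℝ Set.univ fun x : Fin d → ℝ => icnnLayer d n W A b σ x L i := by
  suffices h : ∀ l : ℕ, l ≤ L → ∀ i : Fin (n l),
      ConvexOn ℝ Set.univ fun x : Fin d → ℝ => icnnLayer d n W A b σ x l i from
    h L le_rfl
  intro l
  induction l with
  | zero =>
    intro _ i
    simp only [icnnLayer, Pi.zero_apply]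
    exact convexOn_const 0 convex_univ
  | succ m ih =>
    intro hmL i
    have hm' : m ≤ L := Nat.le_of_succ_le hmL
    rcases Nat.eq_zero_or_pos m with hm0 | hmpos
    · -- first layer: affine in x
      subst hm0
      simp only [icnnLayer, hW0, Matrix.zero_mulVec, Pi.zero_apply, zero_add]
      refine ⟨convex_univ, fun x _ y _ a c ha hc hac => ?_⟩
      have : (A 0).mulVec (a • x + c • y) i + b 0 i
          = a • ((A 0).mulVec x i + b 0 i) + c • ((A 0).mulVec y i + b 0 i) := by
        have hb : a * b 0 i + c * b 0 i = b 0 i := by rw [← add_mul, hac, one_mul]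
        simp only [Matrix.mulVec_add, Matrix.mulVec_smul, Pi.add_apply, Pi.smul_apply,
          smul_eq_mul]
        linarith
      dsimp only
      rw [this]
      exact (hσ0.2 (Set.mem_univ _) (Set.mem_univ _) ha hc hac)
    · -- later layers
      have hσm := hσ m hmpos (by omega)
      simp only [icnnLayer]
      refine icnn_comp_aux hσm.1 hσm.2 ?_
      refine ⟨convex_univ, fun x _ y _ a c ha hc hac => ?_⟩
      have hz : ∀ j, icnnLayer d n W A b σ (a • x + c • y) m j
          ≤ a * icnnLayer d n W A b σ x m j + c * icnnLayer d n W A b σ y m j := by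
        intro j
        have := (ih hm' j).2 (Set.mem_univ x) (Set.mem_univ y) ha hc hac
        simpa using this
      have hWsum : (W m).mulVec (icnnLayer d n W A b σ (a • x + c • y) m) i
          ≤ a * (W m).mulVec (icnnLayer d n W A b σ x m) i
            + c * (W m).mulVec (icnnLayer d n W A b σ y m) i := by
        simp only [Matrix.mulVec, dotProduct, Finset.mul_sum]
        rw [← Finset.sum_add_distrib]
        refine Finset.sum_le_sum fun j _ => ?_
        have hWij := hW m hmpos i j
        calc W m i j * icnnLayer d n W A b σ (a • x + c • y) m j
            ≤ W m i j * (a * icnnLayer d n W A b σ x m j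
                + c * icnnLayer d n W A b σ y m j) :=
              mul_le_mul_of_nonneg_left (hz j) hWij
          _ = a * (W m i j * icnnLayer d n W A b σ x m j)
                + c * (W m i j * icnnLayer d n W A b σ y m j) := by ring
      have hA : (A m).mulVec (a • x + c • y) i
          = a * (A m).mulVec x i + c * (A m).mulVec y i := by
        simp [Matrix.mulVec_add, Matrix.mulVec_smul]
      simp only [smul_eq_mul]
      calc (W m).mulVec (icnnLayer d n W A b σ (a • x + c • y) m) i
            + (A m).mulVec (a • x + c • y) i + b m i
          ≤ (a * (W m).mulVec (icnnLayer d n W A b σ x m) i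
              + c * (W m).mulVec (icnnLayer d n W A b σ y m) i)
            + (a * (A m).mulVec x i + c * (A m).mulVec y i) + b m i := by
            rw [hA]; linarith
        _ = a * ((W m).mulVec (icnnLayer d n W A b σ x m) i + (A m).mulVec x i + b m i)
            + c * ((W m).mulVec (icnnLayer d n W A b σ y m) i + (A m).mulVec y i + b m i) := by
            have hb : a * b m i + c * b m i = b m i := by rw [← add_mul, hac, one_mul]
            linear_combination -hb
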